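/- arXiv:1310.1037 — 5 statements merged into one kernel-verified Lean document; each statement's English description precedes it below -/
import Mathlib

section
/- Let X and Z be Hermitian matrices in M_n(ℂ) satisfying X² = 1, Z² = 1 and XZ = −ZX. Then for every density matrix ρ ∈ M_n(ℂ) one has (tr(Xρ))² + (tr(Zρ))² ≤ 1. -/
/-! With `a = re tr(Xρ)` and `b = re tr(Zρ)`, anticommutation makes `W = aX + bZ` a Hermitian
matrix with `W² = (a² + b²)·1`. Positivity of `tr((1 - W)ᴴ(1 - W)ρ)` then reads
`2 re tr(Wρ) ≤ 1 + (a² + b²)`, and `re tr(Wρ) = a² + b²`. -/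

open Matrix ComplexOrder

theorem smul_add_smul_mul_self_of_anticommute {R A : Type*} [CommRing R] [Ring A] [Algebra R A]
    {X Z : A} (hX : X * X = 1) (hZ : Z * Z = 1) (hXZ : X * Z = -(Z * X)) (a b : R) :
    (a • X + b • Z) * (a • X + b • Z) = (a ^ 2 + b ^ 2) • (1 : A) := by
  simp only [add_mul, mul_add, smul_mul_smul_comm, hX, hZ, hXZ]
  module

namespace Matrix

variable {n 𝕜 : Type*} [Fintype n] [RCLike 𝕜]

theorem PosSemidef.trace_conjTranspose_mul_self_mul_nonneg {ρ : Matrix n n 𝕜}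
    (hρ : ρ.PosSemidef) (M : Matrix n n 𝕜) : 0 ≤ (Mᴴ * M * ρ).trace := by
  rw [Matrix.mul_assoc, trace_mul_comm, Matrix.mul_assoc, ← Matrix.mul_assoc]
  exact (hρ.mul_mul_conjTranspose_same M).trace_nonneg

open RCLike in
theorem IsHermitian.two_mul_re_trace_mul_le [DecidableEq n] {W ρ : Matrix n n 𝕜}
    (hW : W.IsHermitian) {c : ℝ} (hW2 : W * W = c • (1 : Matrix n n 𝕜))
    (hρ : ρ.PosSemidef) (hρtr : ρ.trace = 1) :
    2 * re (W * ρ).trace ≤ 1 + c := by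
  have hsq : (1 - W)ᴴ * (1 - W) * ρ = ρ - (W * ρ + W * ρ) + c • ρ := by
    rw [conjTranspose_sub, conjTranspose_one, hW.eq, sub_mul, mul_sub, mul_sub, hW2]
    simp only [one_mul, mul_one, sub_mul, smul_mul_assoc]
    abel
  have hnn := nonneg_iff.mp (hρ.trace_conjTranspose_mul_self_mul_nonneg (1 - W))
  rw [hsq, trace_add, trace_sub, trace_add, trace_smul, hρtr] at hnn
  simp only [map_add, map_sub, smul_re, one_re, mul_one] at hnn
  linarith [hnn.1]

end Matrix

/-- Mixed-state uncertainty relation for anticommuting Hermitian involutions: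
for any density matrix `ρ`, `(tr(Xρ))² + (tr(Zρ))² ≤ 1`. -/
theorem mixed_state_uncertainty_anticommuting_involutions {n : ℕ}
    (X Z : Matrix (Fin n) (Fin n) ℂ)
    (hX : X.IsHermitian) (hZ : Z.IsHermitian)
    (hX2 : X * X = 1) (hZ2 : Z * Z = 1)
    (hanti : X * Z = -(Z * X))
    (ρ : Matrix (Fin n) (Fin n) ℂ) (hρ : ρ.PosSemidef) (hρtr : ρ.trace = 1) :
    ((X * ρ).trace).re ^ 2 + ((Z * ρ).trace).re ^ 2 ≤ 1 := by
  set a := ((X * ρ).trace).re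
  set b := ((Z * ρ).trace).re
  have hW : (a • X + b • Z).IsHermitian := (hX.smul (.all a)).add (hZ.smul (.all b))
  have h := hW.two_mul_re_trace_mul_le (smul_add_smul_mul_self_of_anticommute hX2 hZ2 hanti a b)
    hρ hρtr
  rw [add_mul, smul_mul_assoc, smul_mul_assoc, trace_add, trace_smul, trace_smul] at h
  simp only [RCLike.re_to_complex, Complex.add_re, Complex.smul_re, smul_eq_mul] at h
  nlinarith
end

section
/- Let E : M_{ab}(ℂ) → M_{ab}(ℂ) be a linear, Hermiticity-preserving map (E(Xᴴ) = E(X)ᴴ for all X), where M_{ab}(ℂ) denotes matrices on ℂ^a ⊗ ℂ^b, and let E† denote its adjoint with respect to the Hilbert–Schmidt inner product ⟨A, B⟩ = tr(AᴴB). Let P̄ ∈ M_{ab}(ℂ) be Hermitian with operator norm ‖P̄‖_∞ ≤ 1, suppose there is a Hermitian Q ∈ M_b(ℂ) with ‖E†(P̄) − 1_a ⊗ Q‖_∞ ≤ δ, and suppose there are density matrices ρ₀, ρ₁ ∈ M_a(ℂ) and a density matrix Φ ∈ M_b(ℂ) such that tr(P̄ · E((ρ₀ − ρ₁) ⊗ Φ))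 ≥ 2 − ε for some real ε ≥ 0. Then δ ≥ (2 − ε)/2. -/
/-! Write `E†(P̄) = D + 1 ⊗ Q` with `‖D‖ ≤ δ`. By duality the bias is
`tr (E†(P̄)ᴴ ((ρ₀ - ρ₁) ⊗ Φ))`; the `1 ⊗ Q` part cancels because `tr ρ₀ = tr ρ₁`, and each of the
two remaining terms `tr (Dᴴ (ρᵢ ⊗ Φ))` is at most `‖D‖` in modulus, since `x ↦ tr (x σ)` is a
positive functional for a density matrix `σ`, and a positive functional `f` on a unital
C⋆-algebra satisfies `‖f x‖ ≤ f 1 ‖x‖` (Cauchy–Schwarz for the GNS form `f (x⋆ y)`). -/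

open Matrix ComplexOrder Kronecker

noncomputable def opNorm {m : Type*} [Fintype m] [DecidableEq m]
    (A : Matrix m m ℂ) : ℝ :=
  ‖Matrix.toEuclideanCLM (𝕜 := ℂ) A‖

namespace PositiveLinearMap

variable {A : Type*} [CStarAlgebra A] [PartialOrder A] [StarOrderedRing A]

theorem norm_apply_le_norm_apply_one_mul (f : A →ₚ[ℂ] ℂ) (a : A) : ‖f a‖ ≤ ‖f 1‖ * ‖a‖ := by
  have hcs : ‖f a‖ ^ 2 ≤ ‖f.toPreGNS 1‖ ^ 2 * ‖f.toPreGNS a‖ ^ 2 := by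
    simpa [mul_pow, preGNS_inner_def] using
      pow_le_pow_left₀ (norm_nonneg _) (norm_inner_le_norm (𝕜 := ℂ) (f.toPreGNS 1) (f.toPreGNS a)) 2
  have hgns (x : A) : ‖f.toPreGNS x‖ ^ 2 = ‖f (star x * x)‖ := by
    simpa using congrArg norm (f.preGNS_norm_sq (f.toPreGNS x))
  have hpos : ‖f (star a * a)‖ ≤ ‖f 1‖ * ‖a‖ ^ 2 := by
    simpa only [CStarRing.norm_star_mul_self, sq] using
      f.norm_apply_le_of_nonneg _ (star_mul_self_nonneg a)
  refine pow_le_pow_iff_left₀ (norm_nonneg _) (by positivity) two_ne_zero |>.mp ?_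
  calc ‖f a‖ ^ 2 ≤ ‖f 1‖ * ‖f (star a * a)‖ := by simpa [hgns] using hcs
    _ ≤ ‖f 1‖ * (‖f 1‖ * ‖a‖ ^ 2) := by gcongr
    _ = (‖f 1‖ * ‖a‖) ^ 2 := by ring

end PositiveLinearMap

namespace Matrix

variable {n : Type*} [Fintype n] [DecidableEq n]

section

open scoped Matrix.Norms.L2Operator MatrixOrder

noncomputable def PosSemidef.traceMulPositiveLinearMap {σ : Matrix n n ℂ} (hσ : σ.PosSemidef) :
    Matrix n n ℂ →ₚ[ℂ] ℂ :=
  .mk₀ (traceLinearMap n ℂ ℂ ∘ₗ LinearMap.mulRight ℂ σ) fun x hx => by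
    obtain ⟨b, rfl⟩ := CStarAlgebra.nonneg_iff_eq_star_mul_self.mp hx
    simpa [Matrix.mul_assoc, trace_mul_comm (star b)] using
      (star_right_conjugate_nonneg hσ.nonneg b).posSemidef.trace_nonneg

theorem PosSemidef.traceMulPositiveLinearMap_apply {σ : Matrix n n ℂ} (hσ : σ.PosSemidef)
    (x : Matrix n n ℂ) : hσ.traceMulPositiveLinearMap x = (x * σ).trace :=
  rfl

theorem PosSemidef.norm_trace_mul_le {σ : Matrix n n ℂ} (hσ : σ.PosSemidef) (a : Matrix n n ℂ) :
    ‖(a * σ).trace‖ ≤ ‖σ.trace‖ * opNorm a := by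
  have h := hσ.traceMulPositiveLinearMap.norm_apply_le_norm_apply_one_mul a
  rwa [traceMulPositiveLinearMap_apply, traceMulPositiveLinearMap_apply, Matrix.one_mul] at h

theorem opNorm_conjTranspose (a : Matrix n n ℂ) : opNorm aᴴ = opNorm a :=
  l2_opNorm_conjTranspose a

end

theorem re_trace_mul_sub_le {σ₀ σ₁ : Matrix n n ℂ} (hσ₀ : σ₀.PosSemidef) (hσ₀tr : σ₀.trace = 1)
    (hσ₁ : σ₁.PosSemidef) (hσ₁tr : σ₁.trace = 1) (a : Matrix n n ℂ) :
    (a * (σ₀ - σ₁)).trace.re ≤ 2 * opNorm a := by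
  have h₀ := hσ₀.norm_trace_mul_le a
  have h₁ := hσ₁.norm_trace_mul_le a
  rw [hσ₀tr, norm_one, one_mul] at h₀
  rw [hσ₁tr, norm_one, one_mul] at h₁
  rw [Matrix.mul_sub, trace_sub, Complex.sub_re]
  linarith [Complex.re_le_norm (a * σ₀).trace,
    (abs_le.mp (Complex.abs_re_le_norm (a * σ₁).trace)).1]

theorem sub_kronecker {l m p q α : Type*} [Ring α] (A B : Matrix l m α) (C : Matrix p q α) :
    (A - B) ⊗ₖ C = A ⊗ₖ C - B ⊗ₖ C := by
  ext
  simp [sub_mul]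

theorem trace_one_kronecker_mul_kronecker {m p α : Type*} [Fintype m] [Fintype p] [DecidableEq m]
    [CommSemiring α] (Q B : Matrix p p α) (A : Matrix m m α) :
    ((1 ⊗ₖ Q) * (A ⊗ₖ B)).trace = A.trace * (Q * B).trace := by
  rw [← mul_kronecker_mul, Matrix.one_mul, trace_kronecker]

end Matrix

theorem heisenberg_observable_not_localizable_general {a b : ℕ}
    (E Edag : Matrix (Fin a × Fin b) (Fin a × Fin b) ℂ →ₗ[ℂ]
      Matrix (Fin a × Fin b) (Fin a × Fin b) ℂ)
    (hadj : ∀ A B : Matrix (Fin a × Fin b) (Fin a × Fin b) ℂ,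
      (Aᴴ * E B).trace = ((Edag A)ᴴ * B).trace)
    (Pbar : Matrix (Fin a × Fin b) (Fin a × Fin b) ℂ)
    (hPbar : Pbar.IsHermitian)
    (Q : Matrix (Fin b) (Fin b) ℂ)
    (δ : ℝ)
    (hclose : opNorm (Edag Pbar - (1 : Matrix (Fin a) (Fin a) ℂ) ⊗ₖ Q) ≤ δ)
    (ρ₀ ρ₁ : Matrix (Fin a) (Fin a) ℂ)
    (hρ₀ : ρ₀.PosSemidef) (hρ₀tr : ρ₀.trace = 1)
    (hρ₁ : ρ₁.PosSemidef) (hρ₁tr : ρ₁.trace = 1)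
    (Φ : Matrix (Fin b) (Fin b) ℂ) (hΦ : Φ.PosSemidef) (hΦtr : Φ.trace = 1)
    (ε : ℝ)
    (hdist : 2 - ε ≤ ((Pbar * E ((ρ₀ - ρ₁) ⊗ₖ Φ)).trace).re) :
    δ ≥ (2 - ε) / 2 := by
  set D := Edag Pbar - (1 : Matrix (Fin a) (Fin a) ℂ) ⊗ₖ Q
  have hlocal : ((1 ⊗ₖ Q)ᴴ * ((ρ₀ - ρ₁) ⊗ₖ Φ)).trace = 0 := by
    rw [conjTranspose_kronecker, conjTranspose_one, trace_one_kronecker_mul_kronecker, trace_sub,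
      hρ₀tr, hρ₁tr, sub_self, zero_mul]
  have hshift : (Pbar * E ((ρ₀ - ρ₁) ⊗ₖ Φ)).trace = (Dᴴ * (ρ₀ ⊗ₖ Φ - ρ₁ ⊗ₖ Φ)).trace := by
    rw [← hPbar.eq, hadj, ← sub_kronecker, conjTranspose_sub, Matrix.sub_mul, trace_sub, hlocal,
      sub_zero]
  have hbound := re_trace_mul_sub_le
    (hρ₀.kronecker hΦ) (by rw [trace_kronecker, hρ₀tr, hΦtr, one_mul])
    (hρ₁.kronecker hΦ) (by rw [trace_kronecker, hρ₁tr, hΦtr, one_mul]) Dᴴ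
  rw [← hshift, opNorm_conjTranspose] at hbound
  linarith

/-- Abstract core of the encoding-time lower bound: if a Hermiticity-preserving
linear map `E` (with Hilbert–Schmidt adjoint `Edag`) sends `(ρ₀ - ρ₁) ⊗ Φ` to
something distinguished with bias `≥ 2 - ε` by an observable `P̄` of norm at most
one, then `Edag P̄` cannot be `δ`-approximated in operator norm by `1 ⊗ Q`
unless `δ ≥ (2 - ε)/2`. -/
theorem heisenberg_observable_not_localizable {a b : ℕ}
    (E Edag : Matrix (Fin a × Fin b) (Fin a × Fin b) ℂ →ₗ[ℂ]
      Matrix (Fin a × Fin b) (Fin a × Fin b) ℂ)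
    (hHerm : ∀ X : Matrix (Fin a × Fin b) (Fin a × Fin b) ℂ, E Xᴴ = (E X)ᴴ)
    (hadj : ∀ A B : Matrix (Fin a × Fin b) (Fin a × Fin b) ℂ,
      (Aᴴ * E B).trace = ((Edag A)ᴴ * B).trace)
    (Pbar : Matrix (Fin a × Fin b) (Fin a × Fin b) ℂ)
    (hPbar : Pbar.IsHermitian) (hPnorm : opNorm Pbar ≤ 1)
    (Q : Matrix (Fin b) (Fin b) ℂ) (hQ : Q.IsHermitian)
    (δ : ℝ)
    (hclose : opNorm (Edag Pbar - (1 : Matrix (Fin a) (Fin a) ℂ) ⊗ₖ Q) ≤ δ)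
    (ρ₀ ρ₁ : Matrix (Fin a) (Fin a) ℂ)
    (hρ₀ : ρ₀.PosSemidef) (hρ₀tr : ρ₀.trace = 1)
    (hρ₁ : ρ₁.PosSemidef) (hρ₁tr : ρ₁.trace = 1)
    (Φ : Matrix (Fin b) (Fin b) ℂ) (hΦ : Φ.PosSemidef) (hΦtr : Φ.trace = 1)
    (ε : ℝ) (hε : 0 ≤ ε)
    (hdist : 2 - ε ≤ ((Pbar * E ((ρ₀ - ρ₁) ⊗ₖ Φ)).trace).re) :
    δ ≥ (2 - ε) / 2 :=
  heisenberg_observable_not_localizable_general E Edag hadj Pbar hPbar Q δ hclose ρ₀ ρ₁ hρ₀ hρ₀tr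
    hρ₁ hρ₁tr Φ hΦ hΦtr ε hdist
end

section
/- Let C be a subspace of ℂ^a ⊗ ℂ^b, and let Tr_A : M_{ab}(ℂ) → M_b(ℂ) denote the partial trace over the first factor, defined by (Tr_A ρ)_{j j′} = Σ_i ρ_{(i,j),(i,j′)}. Suppose there exists a linear map D : M_b(ℂ) → M_{ab}(ℂ) such that D(Tr_A ρ) = ρ for every density matrix ρ whose range is contained in C. Then for every Hermitian matrix P̄ ∈ M_{ab}(ℂ) there exists a matrix Q ∈ M_b(ℂ) such that tr((1_a ⊗ Q) ρ) = tr(P̄ ρ) for every density matrix ρ with range contained in C. -/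
open Matrix ComplexOrder Kronecker

/-- The partial trace over the first tensor factor:
`(Tr_A ρ)_{j j'} = Σ_i ρ_{(i,j),(i,j')}`. -/
noncomputable def ptraceA {a b : ℕ}
    (ρ : Matrix (Fin a × Fin b) (Fin a × Fin b) ℂ) : Matrix (Fin b) (Fin b) ℂ :=
  Matrix.of fun j j' => ∑ i : Fin a, ρ (i, j) (i, j')

/-- Expectation-value form of the cleaning lemma: if the first tensor factor is
correctable for the code `C` (there is a recovery map `D` with `D ∘ Tr_A = id` on
code states), then every Hermitian observable `P̄` has an equivalent
representative `1 ⊗ Q` with no support on the first factor. -/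
theorem cleaning_lemma_expectation_form {a b : ℕ}
    (C : Submodule ℂ (Fin a × Fin b → ℂ))
    (D : Matrix (Fin b) (Fin b) ℂ →ₗ[ℂ]
      Matrix (Fin a × Fin b) (Fin a × Fin b) ℂ)
    (hD : ∀ ρ : Matrix (Fin a × Fin b) (Fin a × Fin b) ℂ,
      ρ.PosSemidef → ρ.trace = 1 → (∀ v, ρ.mulVec v ∈ C) → D (ptraceA ρ) = ρ) :
    ∀ Pbar : Matrix (Fin a × Fin b) (Fin a × Fin b) ℂ, Pbar.IsHermitian →
      ∃ Q : Matrix (Fin b) (Fin b) ℂ,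
        ∀ ρ : Matrix (Fin a × Fin b) (Fin a × Fin b) ℂ,
          ρ.PosSemidef → ρ.trace = 1 → (∀ v, ρ.mulVec v ∈ C) →
            (((1 : Matrix (Fin a) (Fin a) ℂ) ⊗ₖ Q) * ρ).trace
              = (Pbar * ρ).trace := by
  intro Pbar _
  -- the linear functional σ ↦ tr(Pbar · D σ)
  set f : Matrix (Fin b) (Fin b) ℂ →ₗ[ℂ] ℂ :=
    { toFun := fun σ => (Pbar * D σ).trace
      map_add' := by intro x y; simp [map_add, Matrix.mul_add]
      map_smul' := by intro c x; simp [_root_.map_smul, Matrix.mul_smul] } with hf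
  set Q : Matrix (Fin b) (Fin b) ℂ :=
    Matrix.of fun j j' => f (Matrix.single j' j 1) with hQ
  refine ⟨Q, ?_⟩
  intro ρ hpsd htr hC
  have key : ∀ σ : Matrix (Fin b) (Fin b) ℂ, (Q * σ).trace = (Pbar * D σ).trace := by
    intro σ
    have : (Pbar * D σ).trace = f σ := rfl
    rw [this]
    conv_rhs => rw [Matrix.matrix_eq_sum_single σ]
    rw [map_sum]
    have hterm : ∀ j' j, f (Matrix.single j' j (σ j' j))
        = σ j' j * Q j j' := by
      intro j' j
      have : Matrix.single j' j (σ j' j)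
          = σ j' j • Matrix.single j' j 1 := by
        ext i k
        simp only [Matrix.single, Matrix.smul_apply, Matrix.of_apply, smul_eq_mul]
        by_cases h : j' = i ∧ j = k <;> simp [h]
      rw [this, _root_.map_smul, smul_eq_mul, hQ]
      rfl
    simp only [map_sum, hterm]
    rw [Matrix.trace, Finset.sum_comm]
    refine Finset.sum_congr rfl fun j' _ => ?_
    simp only [Matrix.diag_apply, Matrix.mul_apply]
    refine Finset.sum_congr rfl fun j _ => mul_comm _ _
  have hpt : (((1 : Matrix (Fin a) (Fin a) ℂ) ⊗ₖ Q) * ρ).trace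
      = (Q * ptraceA ρ).trace := by
    simp only [Matrix.trace, Matrix.diag_apply, Matrix.mul_apply, ptraceA,
      Matrix.of_apply, Matrix.kroneckerMap_apply, Fintype.sum_prod_type]
    calc (∑ i : Fin a, ∑ j : Fin b, ∑ i' : Fin a, ∑ j' : Fin b,
            (1 : Matrix (Fin a) (Fin a) ℂ) i i' * Q j j' * ρ (i', j') (i, j))
        = ∑ i : Fin a, ∑ j : Fin b, ∑ j' : Fin b, Q j j' * ρ (i, j') (i, j) := by
          refine Finset.sum_congr rfl fun i _ => Finset.sum_congr rfl fun j _ => ?_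
          rw [Finset.sum_comm]
          refine Finset.sum_congr rfl fun j' _ => ?_
          simp [Matrix.one_apply, ite_mul]
      _ = ∑ j : Fin b, ∑ j' : Fin b, Q j j' * ∑ i : Fin a, ρ (i, j') (i, j) := by
          rw [Finset.sum_comm]
          refine Finset.sum_congr rfl fun j _ => ?_
          rw [Finset.sum_comm]
          exact Finset.sum_congr rfl fun j' _ => (Finset.mul_sum _ _ _).symm
  rw [hpt, key, hD ρ hpsd htr hC]
end

section
/- Let p be a probability distribution on a finite product set A × A that vanishes off the diagonal (p(i, j) = 0 for i ≠ j), and suppose there exist probability distributions q₁, q₂ on A such that Σ_{(i,j)} |p(i, j) − q₁(i) q₂(j)| ≤ η for some η with 0 ≤ η ≤ 1/4. Then p is nearly deterministic: there exists i₀ ∈ A with p(i₀, i₀) ≥ 1 − 4η. -/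
/-- Quantitative version: a probability distribution on `A × A` supported on the
diagonal that is `η`-close in ℓ¹-distance to a product distribution (with
`η ≤ 1/4`) is nearly deterministic: some diagonal entry is at least `1 - 4η`. -/
theorem diagonal_near_product_distribution_nearly_deterministic
    {A : Type*} [Fintype A] (p : A × A → ℝ)
    (hp0 : ∀ x, 0 ≤ p x) (hp1 : ∑ x, p x = 1)
    (hdiag : ∀ i j, i ≠ j → p (i, j) = 0)
    (q₁ q₂ : A → ℝ)
    (hq₁0 : ∀ i, 0 ≤ q₁ i) (hq₁1 : ∑ i, q₁ i = 1)
    (hq₂0 : ∀ j, 0 ≤ q₂ j) (hq₂1 : ∑ j, q₂ j = 1)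
    (η : ℝ) (hη0 : 0 ≤ η) (hη : η ≤ 1/4)
    (hclose : ∑ x : A × A, |p x - q₁ x.1 * q₂ x.2| ≤ η) :
    ∃ i₀ : A, 1 - 4 * η ≤ p (i₀, i₀) := by
  classical
  have hq₁le : ∀ i, q₁ i ≤ 1 := by
    intro i
    calc q₁ i ≤ ∑ j, q₁ j := Finset.single_le_sum (fun j _ => hq₁0 j) (Finset.mem_univ i)
    _ = 1 := hq₁1
  -- each single abs term is ≤ η
  have hsingle : ∀ i : A, |p (i, i) - q₁ i * q₂ i| ≤ η := by
    intro i
    calc |p (i, i) - q₁ i * q₂ i|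
        ≤ ∑ x : A × A, |p x - q₁ x.1 * q₂ x.2| :=
          Finset.single_le_sum (f := fun x : A × A => |p x - q₁ x.1 * q₂ x.2|)
            (fun x _ => abs_nonneg _) (Finset.mem_univ (i, i))
      _ ≤ η := hclose
  -- off-diagonal product mass is ≤ η
  have hg : ∑ x : A × A, (if x.1 = x.2 then (0:ℝ) else q₁ x.1 * q₂ x.2) ≤ η := by
    refine le_trans (Finset.sum_le_sum ?_) hclose
    intro x _
    by_cases h : x.1 = x.2
    · simp [h]
    · have hx0 : p x = 0 := hdiag x.1 x.2 h
      rw [if_neg h, hx0, zero_sub, abs_neg, abs_of_nonneg (mul_nonneg (hq₁0 _) (hq₂0 _))]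
  -- compute that sum: it equals 1 - ∑ q₁ i * q₂ i
  have hrow : ∀ i, ∑ j, (if i = j then (0:ℝ) else q₁ i * q₂ j) = q₁ i - q₁ i * q₂ i := by
    intro i
    have hfun : ∀ j, (if i = j then (0:ℝ) else q₁ i * q₂ j)
        = q₁ i * q₂ j - (if i = j then q₁ i * q₂ j else 0) := by
      intro j; split_ifs <;> ring
    rw [Finset.sum_congr rfl (fun j _ => hfun j), Finset.sum_sub_distrib,
      Finset.sum_ite_eq, ← Finset.mul_sum, hq₂1, mul_one]
    simp
  have hgval : ∑ x : A × A, (if x.1 = x.2 then (0:ℝ) else q₁ x.1 * q₂ x.2)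
      = 1 - ∑ i, q₁ i * q₂ i := by
    rw [Fintype.sum_prod_type]
    simp only []
    calc ∑ i, ∑ j, (if i = j then (0:ℝ) else q₁ i * q₂ j)
        = ∑ i, (q₁ i - q₁ i * q₂ i) := Finset.sum_congr rfl (fun i _ => hrow i)
      _ = 1 - ∑ i, q₁ i * q₂ i := by rw [Finset.sum_sub_distrib, hq₁1]
  have hsum_r : 1 - η ≤ ∑ i, q₁ i * q₂ i := by
    rw [hgval] at hg; linarith
  -- there is an index with large q₂
  have hex : ∃ i, 1 - η ≤ q₂ i := by
    by_contra h
    push_neg at h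
    have hkey : ∑ i, q₁ i * (1 - q₂ i) = 1 - ∑ i, q₁ i * q₂ i := by
      simp only [mul_sub, mul_one]
      rw [Finset.sum_sub_distrib, hq₁1]
    have hpos : ∃ i, 0 < q₁ i := by
      by_contra hq
      push_neg at hq
      have : ∑ i, q₁ i ≤ 0 := Finset.sum_nonpos (fun i _ => hq i)
      linarith [hq₁1 ▸ this]
    obtain ⟨i, hi⟩ := hpos
    have hlt : ∑ j, q₁ j * η < ∑ j, q₁ j * (1 - q₂ j) := by
      apply Finset.sum_lt_sum
      · intro j _
        exact mul_le_mul_of_nonneg_left (by linarith [h j]) (hq₁0 j)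
      · exact ⟨i, Finset.mem_univ i, by nlinarith [h i]⟩
    have hηsum : ∑ j, q₁ j * η = η := by rw [← Finset.sum_mul, hq₁1, one_mul]
    rw [hηsum, hkey] at hlt
    linarith
  obtain ⟨i₀, hi₀⟩ := hex
  -- column bound: q₂ i₀ * (1 - q₁ i₀) ≤ η
  have hcol : q₂ i₀ * (1 - q₁ i₀) ≤ η := by
    have hkey : ∑ j, q₂ j * (1 - q₁ j) = 1 - ∑ j, q₁ j * q₂ j := by
      simp only [mul_sub, mul_one]
      rw [Finset.sum_sub_distrib, hq₂1]
      congr 1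
      exact Finset.sum_congr rfl (fun j _ => by ring)
    calc q₂ i₀ * (1 - q₁ i₀) ≤ ∑ j, q₂ j * (1 - q₁ j) :=
          Finset.single_le_sum (f := fun j => q₂ j * (1 - q₁ j))
            (fun j _ => mul_nonneg (hq₂0 j) (by linarith [hq₁le j]))
            (Finset.mem_univ i₀)
      _ = 1 - ∑ j, q₁ j * q₂ j := hkey
      _ ≤ η := by linarith
  refine ⟨i₀, ?_⟩
  have habs := abs_le.mp (hsingle i₀)
  have hid : q₁ i₀ * q₂ i₀ = q₂ i₀ - q₂ i₀ * (1 - q₁ i₀) := by ring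
  linarith [habs.1, habs.2]
end

section
/- Maassen–Uffink uncertainty relation: let (e_i)_{i=1}^n and (f_j)_{j=1}^n be two orthonormal bases of ℂⁿ and let ψ ∈ ℂⁿ be a unit vector. Define the outcome distributions p(i) = |⟨e_i, ψ⟩|² and q(j) = |⟨f_j, ψ⟩|². Then H(p) + H(q) ≥ −log( max_{i,j} |⟨e_i, f_j⟩|² ), where H denotes the Shannon entropy H(p) = −Σ_i p(i) log p(i). -/
/-- Shannon entropy of a distribution on a finite set,
`H(p) = -Σ_s p(s) log p(s)` (with `0 log 0 = 0`). -/
noncomputable def shannonEntropy {S : Type*} [Fintype S] (p : S → ℝ) : ℝ :=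
  ∑ s, Real.negMulLog (p s)

/-!
The change of basis matrix `T j i = ⟪f j, e i⟫` sends the coefficients `a i = ⟪e i, ψ⟫` to
`b j = ⟪f j, ψ⟫`. It is an isometry of `ℓ²` and its entries are bounded by `√c`, where
`c = max |⟪e i, f j⟫|²`, so it maps `ℓ¹` to `ℓ^∞` with norm `√c`. The Riesz–Thorin argument,
i.e. Hadamard's three lines theorem applied to `⟪y, T a⟫` after raising the moduli of the entries
of `y` and `a` to a complex power, interpolates between the two bounds:
`‖b‖_q ≤ c ^ (θ / 2) ‖a‖_p` for `p = 2 / (1 + θ)` and `q = 2 / (1 - θ)`. For the distributions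
`|a i|²` and `|b j|²` this is the Rényi uncertainty relation
`H_{1/(1+θ)} + H_{1/(1-θ)} ≥ -log c`, and as `θ → 0⁺` both Rényi entropies tend to the
Shannon entropies.
-/

open Complex ComplexConjugate Finset Matrix Filter Topology

lemma Real.rpow_le_rpow_add_rpow {r s e t : ℝ} (hr : 0 ≤ r) (hs : 0 ≤ s) (hse : s ≤ e)
    (het : e ≤ t) : r ^ e ≤ r ^ s + r ^ t := by
  rcases le_total r 1 with h1 | h1
  · exact (rpow_le_rpow_of_exponent_ge' hr h1 hs hse).trans
      (le_add_of_nonneg_right (rpow_nonneg hr t))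
  · exact (rpow_le_rpow_of_exponent_le h1 het).trans
      (le_add_of_nonneg_left (rpow_nonneg hr s))

lemma Real.hasDerivAt_const_rpow_of_nonneg {x : ℝ} (hx : 0 ≤ x) {s : ℝ} (hs : 0 < s) :
    HasDerivAt (fun t => x ^ t) (x ^ s * Real.log x) s := by
  rcases hx.eq_or_lt with rfl | hx
  · rw [Real.zero_rpow hs.ne', zero_mul]
    refine (hasDerivAt_const s (0 : ℝ)).congr_of_eventuallyEq ?_
    filter_upwards [lt_mem_nhds hs] with t ht using Real.zero_rpow ht.ne'
  · exact (Real.hasStrictDerivAt_const_rpow hx s).hasDerivAt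

lemma tendsto_inv_one_add_mul_nhdsGT_zero {c : ℝ} (hc : c ≠ 0) :
    Tendsto (fun θ : ℝ => (1 + c * θ)⁻¹) (𝓝[>] 0) (𝓝[≠] 1) := by
  refine tendsto_nhdsWithin_iff.2 ⟨tendsto_nhdsWithin_of_tendsto_nhds ?_, ?_⟩
  · have : ContinuousAt (fun θ : ℝ => (1 + c * θ)⁻¹) 0 := by fun_prop (disch := norm_num)
    simpa using this.tendsto
  · filter_upwards [self_mem_nhdsWithin] with θ (hθ : 0 < θ)
    simp [hc, hθ.ne']

section Entropy

-- At `α = 1` the division by `1 - α` returns `0`, not the Shannon entropy.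
noncomputable def renyiEntropy {S : Type*} [Fintype S] (α : ℝ) (p : S → ℝ) : ℝ :=
  Real.log (∑ s, p s ^ α) / (1 - α)

variable {S : Type*} [Fintype S] {p : S → ℝ}

lemma hasDerivAt_log_sum_rpow (hp : ∀ s, 0 ≤ p s) (h1 : ∑ s, p s = 1) :
    HasDerivAt (fun α : ℝ => Real.log (∑ s, p s ^ α)) (-shannonEntropy p) 1 := by
  have hsum : HasDerivAt (fun α : ℝ => ∑ s, p s ^ α) (∑ s, p s * Real.log (p s)) 1 := by
    simpa only [Real.rpow_one] using
      HasDerivAt.fun_sum fun s _ => Real.hasDerivAt_const_rpow_of_nonneg (hp s) one_pos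
  have hone : ∑ s, p s ^ (1 : ℝ) = 1 := by simpa only [Real.rpow_one] using h1
  convert hsum.log (by rw [hone]; exact one_ne_zero) using 1
  simp [h1, shannonEntropy, Real.negMulLog]

lemma tendsto_renyiEntropy_shannonEntropy (hp : ∀ s, 0 ≤ p s) (h1 : ∑ s, p s = 1) :
    Tendsto (fun α => renyiEntropy α p) (𝓝[≠] (1 : ℝ)) (𝓝 (shannonEntropy p)) := by
  have := (hasDerivAt_iff_tendsto_slope.1 (hasDerivAt_log_sum_rpow hp h1)).neg
  rw [neg_neg] at this
  refine this.congr fun α => ?_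
  simp only [slope_def_field, Real.rpow_one, h1, Real.log_one, sub_zero, renyiEntropy]
  rw [← div_neg, neg_sub]

end Entropy

-- `phasePow s x = |x| ^ s * (x / |x|)`: the phase of `x` is kept and its modulus is raised to
-- the power `s`. Written this way it is entire in `s`, also for `x = 0`.
noncomputable def phasePow (s x : ℂ) : ℂ := (‖x‖ : ℂ) ^ (s - 1) * x

lemma phasePow_one (x : ℂ) : phasePow 1 x = x := by simp [phasePow]

lemma norm_phasePow (x : ℂ) {s : ℂ} (hs : s.re ≠ 0) : ‖phasePow s x‖ = ‖x‖ ^ s.re := by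
  rcases eq_or_ne x 0 with rfl | hx
  · simp [phasePow, Real.zero_rpow hs]
  · have hx' : 0 < ‖x‖ := norm_pos_iff.mpr hx
    rw [phasePow, norm_mul, norm_cpow_eq_rpow_re_of_pos hx', sub_re, one_re,
      Real.rpow_sub_one hx'.ne', div_mul_cancel₀ _ hx'.ne']

lemma differentiable_phasePow (x : ℂ) : Differentiable ℂ (phasePow · x) := by
  rcases eq_or_ne x 0 with rfl | hx
  · simp [phasePow, differentiable_const]
  · exact ((differentiable_id.sub_const 1).const_cpow
      (Or.inl (by exact_mod_cast norm_ne_zero_iff.mpr hx))).mul_const x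

variable {ι κ : Type*} [Fintype ι] [Fintype κ]

lemma norm_dotProduct_mulVec_le_of_norm_le {T : Matrix κ ι ℂ} {C : ℝ}
    (hT : ∀ j i, ‖T j i‖ ≤ C) (v : κ → ℂ) (u : ι → ℂ) :
    ‖v ⬝ᵥ (T *ᵥ u)‖ ≤ C * (∑ j, ‖v j‖) * ∑ i, ‖u i‖ := by
  have hrow : ∀ j, ‖(T *ᵥ u) j‖ ≤ C * ∑ i, ‖u i‖ := fun j => by
    calc ‖(T *ᵥ u) j‖ ≤ ∑ i, ‖T j i‖ * ‖u i‖ := by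
          simpa [mulVec, dotProduct] using norm_sum_le_of_le _ fun i _ => (norm_mul_le _ _)
      _ ≤ ∑ i, C * ‖u i‖ := by gcongr with i; exact hT j i
      _ = C * ∑ i, ‖u i‖ := (mul_sum ..).symm
  calc ‖v ⬝ᵥ (T *ᵥ u)‖ ≤ ∑ j, ‖v j‖ * (C * ∑ i, ‖u i‖) := by
        refine norm_sum_le_of_le _ fun j _ => ?_
        rw [norm_mul]
        exact mul_le_mul_of_nonneg_left (hrow j) (norm_nonneg _)
    _ = C * (∑ j, ‖v j‖) * ∑ i, ‖u i‖ := by rw [← sum_mul]; ring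

lemma norm_dotProduct_mulVec_le_of_contraction {T : Matrix κ ι ℂ}
    (hT : ∀ u, ∑ j, ‖(T *ᵥ u) j‖ ^ 2 ≤ ∑ i, ‖u i‖ ^ 2) (v : κ → ℂ) (u : ι → ℂ) :
    ‖v ⬝ᵥ (T *ᵥ u)‖ ≤ √(∑ j, ‖v j‖ ^ 2) * √(∑ i, ‖u i‖ ^ 2) :=
  calc ‖v ⬝ᵥ (T *ᵥ u)‖ ≤ ∑ j, ‖v j‖ * ‖(T *ᵥ u) j‖ :=
        norm_sum_le_of_le _ fun j _ => (norm_mul_le _ _)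
    _ ≤ √(∑ j, ‖v j‖ ^ 2) * √(∑ j, ‖(T *ᵥ u) j‖ ^ 2) := Real.sum_mul_le_sqrt_mul_sqrt _ _ _
    _ ≤ √(∑ j, ‖v j‖ ^ 2) * √(∑ i, ‖u i‖ ^ 2) := by gcongr; exact hT u

noncomputable def powForm (T : Matrix κ ι ℂ) (y : κ → ℂ) (a : ι → ℂ) (s : ℂ) : ℂ :=
  (fun j => phasePow s (y j)) ⬝ᵥ (T *ᵥ fun i => phasePow s (a i))

section powForm

variable (T : Matrix κ ι ℂ) (y : κ → ℂ) (a : ι → ℂ)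

lemma powForm_one : powForm T y a 1 = y ⬝ᵥ (T *ᵥ a) := by
  simp only [powForm, phasePow_one]

lemma differentiable_powForm : Differentiable ℂ (powForm T y a) := by
  unfold powForm
  simp only [dotProduct, mulVec]
  exact Differentiable.fun_sum fun j _ => (differentiable_phasePow _).mul
    (Differentiable.fun_sum fun i _ => (differentiable_phasePow _).const_mul _)

lemma norm_powForm_le_of_norm_le {C : ℝ} (hT : ∀ j i, ‖T j i‖ ≤ C) {s : ℂ} (hs : s.re ≠ 0) :
    ‖powForm T y a s‖ ≤ C * (∑ j, ‖y j‖ ^ s.re) * ∑ i, ‖a i‖ ^ s.re := by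
  rw [powForm]
  simpa only [norm_phasePow _ hs] using norm_dotProduct_mulVec_le_of_norm_le hT
    (fun j => phasePow s (y j)) (fun i => phasePow s (a i))

lemma norm_powForm_le_of_contraction (hT : ∀ u, ∑ j, ‖(T *ᵥ u) j‖ ^ 2 ≤ ∑ i, ‖u i‖ ^ 2)
    {s : ℂ} (hs : s.re ≠ 0) :
    ‖powForm T y a s‖ ≤ √(∑ j, ‖y j‖ ^ (2 * s.re)) * √(∑ i, ‖a i‖ ^ (2 * s.re)) := by
  have hsq : ∀ x : ℂ, ‖phasePow s x‖ ^ 2 = ‖x‖ ^ (2 * s.re) := fun x => by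
    rw [norm_phasePow x hs, ← Real.rpow_natCast, ← Real.rpow_mul (norm_nonneg x), mul_comm]
    norm_num
  rw [powForm]
  simpa only [hsq] using norm_dotProduct_mulVec_le_of_contraction hT
    (fun j => phasePow s (y j)) (fun i => phasePow s (a i))

lemma norm_powForm_le_of_re_mem_Icc {C : ℝ} (hT : ∀ j i, ‖T j i‖ ≤ C) (hC : 0 ≤ C)
    {s₀ s₁ : ℝ} (hs₀ : 0 < s₀) {s : ℂ} (hs : s.re ∈ Set.Icc s₀ s₁) :
    ‖powForm T y a s‖ ≤
      C * (∑ j, (‖y j‖ ^ s₀ + ‖y j‖ ^ s₁)) * ∑ i, (‖a i‖ ^ s₀ + ‖a i‖ ^ s₁) := by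
  have hM : ∀ x : ℂ, ‖x‖ ^ s.re ≤ ‖x‖ ^ s₀ + ‖x‖ ^ s₁ := fun x =>
    Real.rpow_le_rpow_add_rpow (norm_nonneg x) hs₀.le hs.1 hs.2
  refine (norm_powForm_le_of_norm_le T y a hT (hs₀.trans_le hs.1).ne').trans ?_
  gcongr with j _ i _
  exacts [hM _, hM _]

end powForm

open Complex.HadamardThreeLines in
theorem norm_dotProduct_mulVec_le_interpolation {T : Matrix κ ι ℂ} {C : ℝ}
    (hT1 : ∀ j i, ‖T j i‖ ≤ C) (hT2 : ∀ u, ∑ j, ‖(T *ᵥ u) j‖ ^ 2 ≤ ∑ i, ‖u i‖ ^ 2)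
    (hC : 0 ≤ C) (y : κ → ℂ) (a : ι → ℂ) {θ : ℝ} (hθ0 : 0 ≤ θ) (hθ1 : θ ≤ 1) :
    ‖y ⬝ᵥ (T *ᵥ a)‖ ≤ C ^ θ *
      ((∑ j, ‖y j‖ ^ (2 / (1 + θ))) * ∑ i, ‖a i‖ ^ (2 / (1 + θ))) ^ ((1 + θ) / 2) := by
  have h1θ : 0 < 1 + θ := by linarith
  set Y := ∑ j, ‖y j‖ ^ (2 / (1 + θ))
  set A := ∑ i, ‖a i‖ ^ (2 / (1 + θ))
  have hY : 0 ≤ Y := sum_nonneg fun j _ => Real.rpow_nonneg (norm_nonneg _) _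
  -- the exponent `α z` is `1` at `z = θ`, and its real part is `1 / (1 + θ)` on `re z = 0`
  -- and `2 / (1 + θ)` on `re z = 1`
  let α : ℂ → ℂ := fun z => (1 + z) / ((1 + θ : ℝ) : ℂ)
  have hα : ∀ z, (α z).re = (1 + z.re) / (1 + θ) := fun z => by
    simp only [α, div_ofReal_re, add_re, one_re]
  have hαθ : α θ = 1 := by
    simp only [α, ofReal_add, ofReal_one]
    exact div_self (by exact_mod_cast h1θ.ne')
  let F : ℂ → ℂ := fun z => powForm T y a (α z)
  have hF : Differentiable ℂ F := (differentiable_powForm T y a).comp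
    (((differentiable_const 1).add differentiable_id).div_const _)
  have hB : BddAbove ((norm ∘ F) '' verticalClosedStrip 0 1) := by
    refine ⟨_, Set.forall_mem_image.2 fun z (hz : 0 ≤ z.re ∧ z.re ≤ 1) =>
      norm_powForm_le_of_re_mem_Icc T y a hT1 hC (s₀ := 1 / (1 + θ)) (s₁ := 2 / (1 + θ))
        (by positivity) ?_⟩
    rw [hα]
    exact ⟨by gcongr; linarith, by gcongr; linarith⟩
  have h0 : ∀ z ∈ re ⁻¹' {0}, ‖F z‖ ≤ √(Y * A) := fun z hz => by
    have hs : 2 * (α z).re = 2 / (1 + θ) := by rw [hα, hz]; ring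
    have := norm_powForm_le_of_contraction T y a hT2 (s := α z) (by rw [hα, hz]; positivity)
    rwa [hs, ← Real.sqrt_mul hY] at this
  have h1 : ∀ z ∈ re ⁻¹' {1}, ‖F z‖ ≤ C * (Y * A) := fun z hz => by
    have hs : (α z).re = 2 / (1 + θ) := by rw [hα, hz]; ring
    have := norm_powForm_le_of_norm_le T y a hT1 (s := α z) (by rw [hs]; positivity)
    rwa [hs, mul_assoc] at this
  have := norm_le_interp_of_mem_verticalClosedStrip₀₁' F (z := θ)
    ⟨by simpa using hθ0, by simpa using hθ1⟩ hF.diffContOnCl hB h0 h1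
  rw [ofReal_re, show F θ = _ from hαθ ▸ powForm_one T y a] at this
  refine this.trans_eq ?_
  rw [Real.sqrt_eq_rpow, ← Real.rpow_mul (by positivity), Real.mul_rpow hC (by positivity),
    mul_left_comm, ← Real.rpow_add' (by positivity) (by linarith)]
  ring_nf

lemma exists_dotProduct_eq_sum_rpow_norm (b : κ → ℂ) {q : ℝ} (hq : 1 < q) :
    ∃ y : κ → ℂ, y ⬝ᵥ b = ((∑ j, ‖b j‖ ^ q : ℝ) : ℂ) ∧ ∀ j, ‖y j‖ = ‖b j‖ ^ (q - 1) := by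
  refine ⟨fun j => (‖b j‖ ^ (q - 2) : ℝ) * conj (b j), ?_, fun j => ?_⟩
  · simp only [dotProduct, ofReal_sum]
    refine sum_congr rfl fun j _ => ?_
    rw [mul_assoc, conj_mul', ← ofReal_pow, ← ofReal_mul, ← Real.rpow_natCast,
      ← Real.rpow_add' (norm_nonneg _) (by norm_num; linarith)]
    norm_num
  · rw [norm_mul, norm_real, Real.norm_of_nonneg (Real.rpow_nonneg (norm_nonneg _) _), norm_conj,
      ← Real.rpow_add_one' (norm_nonneg _) (by linarith)]
    ring_nf

theorem sum_rpow_norm_mulVec_le {T : Matrix κ ι ℂ} {C : ℝ}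
    (hT1 : ∀ j i, ‖T j i‖ ≤ C) (hT2 : ∀ u, ∑ j, ‖(T *ᵥ u) j‖ ^ 2 ≤ ∑ i, ‖u i‖ ^ 2)
    (hC : 0 ≤ C) (a : ι → ℂ) {θ : ℝ} (hθ0 : 0 ≤ θ) (hθ1 : θ < 1) :
    (∑ j, ‖(T *ᵥ a) j‖ ^ (2 / (1 - θ))) ^ ((1 - θ) / 2) ≤
      C ^ θ * (∑ i, ‖a i‖ ^ (2 / (1 + θ))) ^ ((1 + θ) / 2) := by
  set Q := ∑ j, ‖(T *ᵥ a) j‖ ^ (2 / (1 - θ))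
  set A := ∑ i, ‖a i‖ ^ (2 / (1 + θ))
  have hQ : 0 ≤ Q := sum_nonneg fun j _ => Real.rpow_nonneg (norm_nonneg _) _
  have hA : 0 ≤ A := sum_nonneg fun i _ => Real.rpow_nonneg (norm_nonneg _) _
  rcases hQ.eq_or_lt with hQ0 | hQpos
  · rw [← hQ0, Real.zero_rpow (by linarith)]
    positivity
  obtain ⟨y, hyb, hy⟩ := exists_dotProduct_eq_sum_rpow_norm (T *ᵥ a) (q := 2 / (1 - θ))
    (by rw [lt_div_iff₀ (by linarith)]; linarith)
  have hyQ : ∑ j, ‖y j‖ ^ (2 / (1 + θ)) = Q := sum_congr rfl fun j _ => by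
    rw [hy, ← Real.rpow_mul (norm_nonneg _)]
    congr 1
    field_simp [show 1 - θ ≠ 0 by linarith, show 1 + θ ≠ 0 by linarith]
    ring
  have key := norm_dotProduct_mulVec_le_interpolation hT1 hT2 hC y a hθ0 hθ1.le
  rw [hyb, hyQ, norm_real, Real.norm_of_nonneg hQ, Real.mul_rpow hQ hA, mul_left_comm,
    mul_comm] at key
  -- cancel `Q ^ ((1 + θ) / 2)` in `key`, using `Q = Q ^ ((1 - θ) / 2) * Q ^ ((1 + θ) / 2)`
  refine le_of_mul_le_mul_right ?_ (Real.rpow_pos_of_pos hQpos ((1 + θ) / 2))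
  rwa [← Real.rpow_add hQpos, show (1 - θ) / 2 + (1 + θ) / 2 = 1 by ring, Real.rpow_one]

lemma sum_sq_norm_rpow_inv (b : κ → ℂ) (t : ℝ) :
    ∑ j, (‖b j‖ ^ 2) ^ t⁻¹ = ∑ j, ‖b j‖ ^ (2 / t) := by
  simp_rw [← Real.rpow_natCast_mul (norm_nonneg _), div_eq_mul_inv, Nat.cast_ofNat]

lemma sum_rpow_norm_pos {b : κ → ℂ} (hb : b ≠ 0) (t : ℝ) : 0 < ∑ j, ‖b j‖ ^ t := by
  obtain ⟨j, hj⟩ := Function.ne_iff.1 hb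
  exact sum_pos' (fun j _ => Real.rpow_nonneg (norm_nonneg _) _)
    ⟨j, mem_univ j, Real.rpow_pos_of_pos (norm_pos_iff.2 hj) t⟩

theorem neg_log_sq_le_renyiEntropy_add {T : Matrix κ ι ℂ} {C : ℝ}
    (hT1 : ∀ j i, ‖T j i‖ ≤ C) (hT2 : ∀ u, ∑ j, ‖(T *ᵥ u) j‖ ^ 2 ≤ ∑ i, ‖u i‖ ^ 2)
    (hC : 0 ≤ C) {a : ι → ℂ} (hb : T *ᵥ a ≠ 0) {θ : ℝ} (hθ0 : 0 < θ) (hθ1 : θ < 1) :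
    -Real.log (C ^ 2) ≤ renyiEntropy (1 + θ)⁻¹ (fun i => ‖a i‖ ^ 2) +
      renyiEntropy (1 - θ)⁻¹ (fun j => ‖(T *ᵥ a) j‖ ^ 2) := by
  have ha : a ≠ 0 := by rintro rfl; exact hb (mulVec_zero T)
  have hQ := sum_rpow_norm_pos hb (2 / (1 - θ))
  have hA := sum_rpow_norm_pos ha (2 / (1 + θ))
  have hRT := sum_rpow_norm_mulVec_le hT1 hT2 hC a hθ0.le hθ1
  have hCpos : 0 < C := by
    refine hC.lt_of_ne fun hC0 => ?_
    rw [← hC0, Real.zero_rpow hθ0.ne', zero_mul] at hRT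
    exact hRT.not_gt (Real.rpow_pos_of_pos hQ _)
  have hlog := Real.log_le_log (Real.rpow_pos_of_pos hQ _) hRT
  rw [Real.log_mul (Real.rpow_pos_of_pos hCpos θ).ne' (Real.rpow_pos_of_pos hA _).ne',
    Real.log_rpow hQ, Real.log_rpow hCpos, Real.log_rpow hA] at hlog
  have hα : 1 - (1 + θ)⁻¹ = θ / (1 + θ) := by field_simp; ring
  have hβ : 1 - (1 - θ)⁻¹ = -(θ / (1 - θ)) := by field_simp [show 1 - θ ≠ 0 by linarith]; ring
  simp only [renyiEntropy, sum_sq_norm_rpow_inv, hα, hβ, Real.log_pow]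
  rw [div_neg, div_div_eq_mul_div, div_div_eq_mul_div, ← sub_eq_add_neg, div_sub_div_same,
    le_div_iff₀ hθ0]
  push_cast
  linarith

theorem neg_log_sq_le_shannonEntropy_add {T : Matrix κ ι ℂ} {C : ℝ}
    (hT1 : ∀ j i, ‖T j i‖ ≤ C) (hT2 : ∀ u, ∑ j, ‖(T *ᵥ u) j‖ ^ 2 ≤ ∑ i, ‖u i‖ ^ 2)
    (hC : 0 ≤ C) {a : ι → ℂ} (ha : ∑ i, ‖a i‖ ^ 2 = 1) (hb : ∑ j, ‖(T *ᵥ a) j‖ ^ 2 = 1) :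
    -Real.log (C ^ 2) ≤ shannonEntropy (fun i => ‖a i‖ ^ 2) +
      shannonEntropy (fun j => ‖(T *ᵥ a) j‖ ^ 2) := by
  have hb0 : T *ᵥ a ≠ 0 := fun h => by simp [h] at hb
  have hα : Tendsto (fun θ : ℝ => (1 + θ)⁻¹) (𝓝[>] 0) (𝓝[≠] 1) := by
    simpa using tendsto_inv_one_add_mul_nhdsGT_zero one_ne_zero
  have hβ : Tendsto (fun θ : ℝ => (1 - θ)⁻¹) (𝓝[>] 0) (𝓝[≠] 1) := by
    simpa [← sub_eq_add_neg] using tendsto_inv_one_add_mul_nhdsGT_zero (neg_ne_zero.2 one_ne_zero)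
  have hlim := ((tendsto_renyiEntropy_shannonEntropy (fun i => sq_nonneg _) ha).comp hα).add
    ((tendsto_renyiEntropy_shannonEntropy (fun j => sq_nonneg _) hb).comp hβ)
  refine ge_of_tendsto hlim ?_
  filter_upwards [Ioo_mem_nhdsGT one_pos] with θ hθ
  exact neg_log_sq_le_renyiEntropy_add hT1 hT2 hC hb0 hθ.1 hθ.2
section OrthonormalBasis

variable {E : Type*} [NormedAddCommGroup E] [InnerProductSpace ℂ E]
  (e : OrthonormalBasis ι ℂ E) (f : OrthonormalBasis κ ℂ E)

lemma OrthonormalBasis.mulVec_inner (x : E) :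
    (of fun j i => inner ℂ (f j) (e i)) *ᵥ (fun i => inner ℂ (e i) x) =
      fun j => inner ℂ (f j) x := by
  ext j
  exact e.sum_inner_mul_inner _ _

lemma OrthonormalBasis.sum_sq_norm_mulVec_inner (u : ι → ℂ) :
    ∑ j, ‖((of fun j i => inner ℂ (f j) (e i)) *ᵥ u) j‖ ^ 2 = ∑ i, ‖u i‖ ^ 2 := by
  set x := e.repr.symm (WithLp.toLp 2 u)
  have hu : (fun i => inner ℂ (e i) x) = u := by
    ext i
    simp [x, ← e.repr_apply_apply]
  rw [← hu, e.mulVec_inner f, f.sum_sq_norm_inner_right, e.sum_sq_norm_inner_right]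

end OrthonormalBasis

/-- Maassen–Uffink entropic uncertainty relation: for two orthonormal bases
`e, f` of `ℂⁿ` and a unit vector `ψ`, the outcome distributions
`p(i) = |⟨e_i, ψ⟩|²` and `q(j) = |⟨f_j, ψ⟩|²` satisfy
`H(p) + H(q) ≥ -log max_{i,j} |⟨e_i, f_j⟩|²`. -/
theorem maassen_uffink_uncertainty {n : ℕ}
    (e f : OrthonormalBasis (Fin n) ℂ (EuclideanSpace ℂ (Fin n)))
    (ψ : EuclideanSpace ℂ (Fin n)) (hψ : ‖ψ‖ = 1) :
    -Real.log (⨆ i : Fin n, ⨆ j : Fin n, ‖(inner ℂ (e i) (f j) : ℂ)‖ ^ 2) ≤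
      shannonEntropy (fun i => ‖(inner ℂ (e i) ψ : ℂ)‖ ^ 2) +
        shannonEntropy (fun j => ‖(inner ℂ (f j) ψ : ℂ)‖ ^ 2) := by
  set c := ⨆ i : Fin n, ⨆ j : Fin n, ‖(inner ℂ (e i) (f j) : ℂ)‖ ^ 2
  have hc : 0 ≤ c := Real.iSup_nonneg fun i => Real.iSup_nonneg fun j => sq_nonneg _
  have hT : ∀ j i, ‖(of fun j i => inner ℂ (f j) (e i)) j i‖ ≤ √c := fun j i => by
    rw [of_apply, norm_inner_symm]
    exact Real.le_sqrt_of_sq_le <|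
      (le_ciSup (f := fun j => ‖(inner ℂ (e i) (f j) : ℂ)‖ ^ 2) (Finite.bddAbove_range _) j).trans
        (le_ciSup (f := fun i => ⨆ j, ‖(inner ℂ (e i) (f j) : ℂ)‖ ^ 2) (Finite.bddAbove_range _) i)
  have hparseval : ∀ g : OrthonormalBasis (Fin n) ℂ (EuclideanSpace ℂ (Fin n)),
      ∑ i, ‖(inner ℂ (g i) ψ : ℂ)‖ ^ 2 = 1 := fun g => by
    rw [g.sum_sq_norm_inner_right, hψ, one_pow]
  have := neg_log_sq_le_shannonEntropy_add hT (fun u => (e.sum_sq_norm_mulVec_inner f u).le)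
    (Real.sqrt_nonneg c) (hparseval e) (by rw [e.mulVec_inner f]; exact hparseval f)
  rwa [Real.sq_sqrt hc, e.mulVec_inner f] at this
end
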